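/- Fix a prompt q and a response distribution p*(·|q), and consider two Markov chains over partially masked states using the same index-reveal policy g(i | z, q, t) depending only on the current visible state and time: (i) the idealized posterior chain, which reveals index I ∼ g and then samples its token from the posterior p*(O_I = · | Z = z, Q = q); and (ii) the teacher-forced chain, which first samples a full response O ∼ p*(·|q) and then reveals index I ∼ g with its true token O_I. Then the marginal laws of the masked states of the two chains agree at every step. -/
import Mathlib


open Finset
open scoped Classical

/-- Marginal law of the idealized posterior-based inference chain: starting from the
fully masked state, at step `j` an index `i` is drawn from the reveal policy `g` and
its token is drawn from the posterior `p*(O_i = · | Z = z)` (posterior of the response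
distribution `pstar` restricted to responses consistent with the visible state). -/
noncomputable def postChain {V : Type*} [Fintype V] (L : ℕ)
    (pstar : (Fin L → V) → ℝ)
    (g : (Fin L → Option V) → ℕ → Fin L → ℝ) :
    ℕ → (Fin L → Option V) → ℝ
  | 0, z => if z = fun _ => (none : Option V) then 1 else 0
  | j + 1, z' =>
      ∑ z : Fin L → Option V, postChain L pstar g j z *
        ∑ i : Fin L, ∑ u : V, g z j i *
          ((∑ o : Fin L → V,
              if (∀ i₀ v, z i₀ = some v → o i₀ = v) ∧ o i = u then pstar o else 0) /
            (∑ o : Fin L → V,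
              if (∀ i₀ v, z i₀ = some v → o i₀ = v) then pstar o else 0)) *
          (if z' = Function.update z i (some u) then 1 else 0)

/-- Joint law of the teacher-forced chain: first a full response `o ∼ pstar`, then at
each step an index `i` is drawn from the same reveal policy `g` and revealed with its
ground-truth token `o i`. -/
noncomputable def teachChain {V : Type*} [Fintype V] (L : ℕ)
    (pstar : (Fin L → V) → ℝ)
    (g : (Fin L → Option V) → ℕ → Fin L → ℝ) :
    ℕ → (Fin L → V) → (Fin L → Option V) → ℝ
  | 0, o, z => pstar o * if z = fun _ => (none : Option V) then 1 else 0
  | j + 1, o, z' =>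
      ∑ z : Fin L → Option V, teachChain L pstar g j o z *
        ∑ i : Fin L, g z j i * (if z' = Function.update z i (some (o i)) then 1 else 0)

section Aux

variable {V : Type*} [Fintype V] {L : ℕ}

/-- `o` is consistent with the partially revealed state `z`. -/
def Cns (z : Fin L → Option V) (o : Fin L → V) : Prop :=
  ∀ i v, z i = some v → o i = v

/-- Total mass of responses consistent with `z`. -/
noncomputable def Cz (pstar : (Fin L → V) → ℝ) (z : Fin L → Option V) : ℝ :=
  ∑ o : Fin L → V, if Cns z o then pstar o else 0

/-- Mass of responses consistent with `z` having token `u` at `i`. -/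
noncomputable def Az (pstar : (Fin L → V) → ℝ) (z : Fin L → Option V)
    (i : Fin L) (u : V) : ℝ :=
  ∑ o : Fin L → V, if Cns z o ∧ o i = u then pstar o else 0

lemma cns_mask (o : Fin L → V) : Cns (fun _ => (none : Option V)) o := by
  intro i v h; simp at h

lemma cns_update_of {z : Fin L → Option V} {o : Fin L → V} {i : Fin L} {u : V}
    (hc : Cns z o) (h : o i = u) : Cns (Function.update z i (some u)) o := by
  intro i₀ v hv
  by_cases hi : i₀ = i
  · subst hi
    rw [Function.update_self] at hv
    rw [h]; exact Option.some_inj.mp hv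
  · rw [Function.update_of_ne hi] at hv
    exact hc i₀ v hv

lemma cns_update_iff {z : Fin L → Option V} {o : Fin L → V} {i : Fin L} {u : V}
    (h : z i = none ∨ z i = some u) :
    Cns (Function.update z i (some u)) o ↔ Cns z o ∧ o i = u := by
  constructor
  · intro hc
    have hu : o i = u := hc i u (by rw [Function.update_self])
    refine ⟨fun i₀ v hv => ?_, hu⟩
    by_cases hi : i₀ = i
    · subst hi
      rcases h with h | h
      · rw [h] at hv; cases hv
      · rw [h] at hv
        rw [hu]; exact Option.some_inj.mp hv
    · exact hc i₀ v (by rw [Function.update_of_ne hi]; exact hv)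
  · rintro ⟨hc, hu⟩; exact cns_update_of hc hu

lemma Cz_update (pstar : (Fin L → V) → ℝ) {z : Fin L → Option V} {i : Fin L} {u : V}
    (h : z i = none ∨ z i = some u) :
    Cz pstar (Function.update z i (some u)) = Az pstar z i u :=
  Finset.sum_congr rfl fun o _ => if_congr (cns_update_iff h) rfl rfl

lemma Cz_mask (pstar : (Fin L → V) → ℝ) :
    Cz pstar (fun _ => (none : Option V)) = ∑ o : Fin L → V, pstar o :=
  Finset.sum_congr rfl fun o _ => if_pos (cns_mask o)

variable {pstar : (Fin L → V) → ℝ}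

lemma pstar_eq_zero_of_Cz (hp0 : ∀ o, 0 ≤ pstar o) {z : Fin L → Option V}
    (hC : Cz pstar z = 0) {o : Fin L → V} (hc : Cns z o) : pstar o = 0 := by
  have h := (Finset.sum_eq_zero_iff_of_nonneg
    (fun o _ => by by_cases hco : Cns z o <;> simp [hco, hp0 o])).mp hC o (Finset.mem_univ o)
  rwa [if_pos hc] at h

lemma Az_nonneg (hp0 : ∀ o, 0 ≤ pstar o) (z : Fin L → Option V) (i : Fin L) (u : V) :
    0 ≤ Az pstar z i u :=
  Finset.sum_nonneg fun o _ => by by_cases h : Cns z o ∧ o i = u <;> simp [h, hp0 o]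

lemma Az_eq_zero_of_Cz (hp0 : ∀ o, 0 ≤ pstar o) {z : Fin L → Option V}
    (hC : Cz pstar z = 0) (i : Fin L) (u : V) : Az pstar z i u = 0 := by
  refine le_antisymm ?_ (Az_nonneg hp0 z i u)
  calc Az pstar z i u ≤ Cz pstar z := by
        refine Finset.sum_le_sum fun o _ => ?_
        by_cases h : Cns z o ∧ o i = u
        · rw [if_pos h, if_pos h.1]
        · rw [if_neg h]
          by_cases h2 : Cns z o <;> simp [h2, hp0 o]
    _ = 0 := hC

lemma Az_eq_zero_of_Cz_update (hp0 : ∀ o, 0 ≤ pstar o) {z : Fin L → Option V}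
    {i : Fin L} {u : V} (hC : Cz pstar (Function.update z i (some u)) = 0) :
    Az pstar z i u = 0 := by
  refine le_antisymm ?_ (Az_nonneg hp0 z i u)
  calc Az pstar z i u ≤ Cz pstar (Function.update z i (some u)) := by
        refine Finset.sum_le_sum fun o _ => ?_
        by_cases h : Cns z o ∧ o i = u
        · rw [if_pos h, if_pos (cns_update_of h.1 h.2)]
        · rw [if_neg h]
          by_cases h2 : Cns (Function.update z i (some u)) o <;> simp [h2, hp0 o]
    _ = 0 := hC

lemma Cz_def (z : Fin L → Option V) :
    Cz pstar z =
      ∑ o : Fin L → V, if (∀ i₀ v, z i₀ = some v → o i₀ = v) then pstar o else 0 :=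
  Finset.sum_congr rfl fun _ _ => if_congr Iff.rfl rfl rfl

lemma Az_def (z : Fin L → Option V) (i : Fin L) (u : V) :
    Az pstar z i u =
      ∑ o : Fin L → V, if (∀ i₀ v, z i₀ = some v → o i₀ = v) ∧ o i = u then pstar o else 0 :=
  Finset.sum_congr rfl fun _ _ => if_congr Iff.rfl rfl rfl

variable (g : (Fin L → Option V) → ℕ → Fin L → ℝ)

lemma teach_succ (j : ℕ) (o : Fin L → V) (z' : Fin L → Option V) :
    teachChain L pstar g (j + 1) o z' =
      ∑ z : Fin L → Option V, teachChain L pstar g j o z *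
        ∑ i : Fin L, g z j i * (if z' = Function.update z i (some (o i)) then 1 else 0) :=
  rfl

lemma post_succ (j : ℕ) (z' : Fin L → Option V) :
    postChain L pstar g (j + 1) z' =
      ∑ z : Fin L → Option V, postChain L pstar g j z *
        ∑ i : Fin L, ∑ u : V, g z j i * (Az pstar z i u / Cz pstar z) *
          (if z' = Function.update z i (some u) then 1 else 0) := by
  rw [postChain]
  simp only [Az_def, Cz_def]

lemma teach_zero_of_not_cns :
    ∀ (j : ℕ) (o : Fin L → V) (z : Fin L → Option V), ¬ Cns z o →
      teachChain L pstar g j o z = 0 := by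
  intro j
  induction j with
  | zero =>
    intro o z h
    by_cases hz : z = fun _ => (none : Option V)
    · exact absurd (hz ▸ cns_mask o) h
    · simp [teachChain, hz]
  | succ j IH =>
    intro o z' h
    rw [teach_succ]
    refine Finset.sum_eq_zero fun z _ => ?_
    by_cases hc : Cns z o
    · have : ∀ i : Fin L,
          g z j i * (if z' = Function.update z i (some (o i)) then (1:ℝ) else 0) = 0 := by
        intro i
        rw [if_neg, mul_zero]
        intro he
        exact h (he ▸ cns_update_of hc rfl)
      rw [Finset.sum_congr rfl fun i _ => this i]
      simp
    · rw [IH o z hc, zero_mul]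

lemma teach_zero_of_pstar {o : Fin L → V} (h : pstar o = 0) :
    ∀ (j : ℕ) (z : Fin L → Option V), teachChain L pstar g j o z = 0 := by
  intro j
  induction j with
  | zero => intro z; simp [teachChain, h]
  | succ j IH =>
    intro z'
    rw [teach_succ]
    exact Finset.sum_eq_zero fun z _ => by rw [IH z, zero_mul]

lemma teach_zero_of_Cz (hp0 : ∀ o, 0 ≤ pstar o) {z : Fin L → Option V}
    (hC : Cz pstar z = 0) (j : ℕ) (o : Fin L → V) :
    teachChain L pstar g j o z = 0 := by
  by_cases hc : Cns z o
  · exact teach_zero_of_pstar g (pstar_eq_zero_of_Cz hp0 hC hc) j z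
  · exact teach_zero_of_not_cns g j o z hc

lemma post_zero (hp0 : ∀ o, 0 ≤ pstar o) (hp1 : ∑ o : Fin L → V, pstar o = 1) :
    ∀ (j : ℕ) (z : Fin L → Option V), Cz pstar z = 0 →
      postChain L pstar g j z = 0 := by
  intro j
  induction j with
  | zero =>
    intro z hC
    by_cases hz : z = fun _ => (none : Option V)
    · rw [hz, Cz_mask, hp1] at hC
      exact absurd hC one_ne_zero
    · simp [postChain, hz]
  | succ j IH =>
    intro z' hC
    rw [post_succ]
    refine Finset.sum_eq_zero fun z _ => ?_
    by_cases hz : Cz pstar z = 0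
    · rw [IH z hz, zero_mul]
    · have : ∀ i : Fin L, ∀ u : V,
          g z j i * (Az pstar z i u / Cz pstar z) *
            (if z' = Function.update z i (some u) then (1:ℝ) else 0) = 0 := by
        intro i u
        by_cases he : z' = Function.update z i (some u)
        · have hA : Az pstar z i u = 0 := Az_eq_zero_of_Cz_update hp0 (he ▸ hC)
          rw [hA]; simp
        · rw [if_neg he, mul_zero]
      rw [Finset.sum_congr rfl fun i _ => Finset.sum_congr rfl fun u _ => this i u]
      simp

/-- Decomposing the reveal indicator over the token value. -/
lemma ind_split (o : Fin L → V) (z z' : Fin L → Option V) (i : Fin L) :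
    (if z' = Function.update z i (some (o i)) then (1:ℝ) else 0) =
      ∑ u : V, if o i = u ∧ z' = Function.update z i (some u) then 1 else 0 := by
  simp only [ite_and]
  rw [Finset.sum_ite_eq]
  simp

/-- Key invariant: conditional on the visible state, the teacher-forced joint law is the
posterior restriction of `pstar` times the marginal of the posterior chain. -/
lemma inv (hp0 : ∀ o, 0 ≤ pstar o) (hp1 : ∑ o : Fin L → V, pstar o = 1) :
    ∀ (j : ℕ) (z : Fin L → Option V) (o : Fin L → V),
      Cz pstar z * teachChain L pstar g j o z =
        (if Cns z o then pstar o else 0) * postChain L pstar g j z := by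
  intro j
  induction j with
  | zero =>
    intro z o
    by_cases hz : z = fun _ => (none : Option V)
    · subst hz
      simp only [teachChain, postChain, if_pos rfl, if_pos (cns_mask o), mul_one]
      rw [Cz_mask, hp1, one_mul]
    · simp [teachChain, postChain, hz]
  | succ j IH =>
    intro z' o
    have key : ∀ (z : Fin L → Option V) (i : Fin L) (u : V),
        Cz pstar z' * (teachChain L pstar g j o z *
          (if o i = u ∧ z' = Function.update z i (some u) then (1:ℝ) else 0)) =
        (if Cns z' o then pstar o else 0) * (postChain L pstar g j z *
          ((Az pstar z i u / Cz pstar z) *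
            (if z' = Function.update z i (some u) then (1:ℝ) else 0))) := by
      intro z i u
      by_cases hz' : z' = Function.update z i (some u)
      · subst hz'
        rw [if_pos rfl]
        have e1 : (if o i = u ∧ Function.update z i (some u) = Function.update z i (some u)
            then (1:ℝ) else 0) = if o i = u then 1 else 0 := by simp
        rw [e1, mul_one]
        by_cases hc : Cns z o
        · by_cases hoi : o i = u
          · have hcons' : Cns (Function.update z i (some u)) o := cns_update_of hc hoi
            have hzi : z i = none ∨ z i = some u := by
              cases hzz : z i with
              | none => exact Or.inl rfl
              | some v =>
                right
                rw [← hc i v hzz, hoi]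
            rw [Cz_update pstar hzi, if_pos hoi, if_pos hcons', mul_one]
            by_cases hCz : Cz pstar z = 0
            · rw [teach_zero_of_Cz g hp0 hCz, Az_eq_zero_of_Cz hp0 hCz]
              simp
            · have hT : teachChain L pstar g j o z =
                  pstar o * postChain L pstar g j z / Cz pstar z := by
                have hIH := IH z o
                rw [if_pos hc] at hIH
                rw [eq_div_iff hCz, mul_comm]
                exact hIH
              rw [hT]
              field_simp
          · have hnc : ¬ Cns (Function.update z i (some u)) o :=
              fun h => hoi (h i u (by rw [Function.update_self]))
            rw [if_neg hoi, if_neg hnc]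
            simp
        · rw [teach_zero_of_not_cns g j o z hc, zero_mul, mul_zero]
          by_cases hc' : Cns (Function.update z i (some u)) o
          · have hoi : o i = u := hc' i u (by rw [Function.update_self])
            simp only [Cns] at hc
            push_neg at hc
            obtain ⟨i₀, v, hzv, hov⟩ := hc
            have hii : i₀ = i := by
              by_contra hne
              exact hov (hc' i₀ v (by rw [Function.update_of_ne hne]; exact hzv))
            have huv : u ≠ v := fun h => hov (by rw [hii, hoi, h])
            have hAz : Az pstar z i u = 0 := by
              refine Finset.sum_eq_zero fun o' _ => ?_
              rw [if_neg]
              rintro ⟨hco', hu'⟩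
              have : o' i = v := hii ▸ hco' i₀ v hzv
              exact huv (hu' ▸ this)
            rw [hAz]
            simp
          · rw [if_neg hc', zero_mul]
      · rw [if_neg hz', if_neg (fun h => hz' h.2)]
        simp
    rw [teach_succ, post_succ, Finset.mul_sum, Finset.mul_sum]
    refine Finset.sum_congr rfl fun z _ => ?_
    calc Cz pstar z' * (teachChain L pstar g j o z *
          ∑ i : Fin L, g z j i * (if z' = Function.update z i (some (o i)) then 1 else 0))
        = ∑ i : Fin L, ∑ u : V, g z j i * (Cz pstar z' * (teachChain L pstar g j o z *
            (if o i = u ∧ z' = Function.update z i (some u) then 1 else 0))) := by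
          rw [Finset.mul_sum, Finset.mul_sum]
          refine Finset.sum_congr rfl fun i _ => ?_
          rw [ind_split o z z' i, Finset.mul_sum, Finset.mul_sum, Finset.mul_sum]
          exact Finset.sum_congr rfl fun u _ => by ring
      _ = ∑ i : Fin L, ∑ u : V, g z j i * ((if Cns z' o then pstar o else 0) *
            (postChain L pstar g j z * ((Az pstar z i u / Cz pstar z) *
              (if z' = Function.update z i (some u) then 1 else 0)))) :=
          Finset.sum_congr rfl fun i _ => Finset.sum_congr rfl fun u _ => by rw [key z i u]
      _ = (if Cns z' o then pstar o else 0) * (postChain L pstar g j z *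
            ∑ i : Fin L, ∑ u : V, g z j i * (Az pstar z i u / Cz pstar z) *
              (if z' = Function.update z i (some u) then 1 else 0)) := by
          rw [Finset.mul_sum, Finset.mul_sum]
          refine Finset.sum_congr rfl fun i _ => ?_
          rw [Finset.mul_sum, Finset.mul_sum]
          exact Finset.sum_congr rfl fun u _ => by ring

end Aux

/-- teacher-forced marginal agreement.  If the index-reveal policy `g`
depends only on the current visible state and time, then the masked-state marginals of
the idealized posterior chain and of the teacher-forced chain agree at every step. -/
theorem stmt16 {V : Type*} [Fintype V] (L : ℕ)
    (pstar : (Fin L → V) → ℝ) (hp0 : ∀ o, 0 ≤ pstar o) (hp1 : ∑ o, pstar o = 1)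
    (g : (Fin L → Option V) → ℕ → Fin L → ℝ)
    (hg0 : ∀ z j i, 0 ≤ g z j i) (hg1 : ∀ z j, ∑ i, g z j i = 1) :
    ∀ (j : ℕ) (z : Fin L → Option V),
      postChain L pstar g j z = ∑ o : Fin L → V, teachChain L pstar g j o z := by
  intro j z
  by_cases hC : Cz pstar z = 0
  · rw [post_zero g hp0 hp1 j z hC]
    exact (Finset.sum_eq_zero fun o _ => teach_zero_of_Cz g hp0 hC j o).symm
  · have hT : ∀ o : Fin L → V, teachChain L pstar g j o z =
        (if Cns z o then pstar o else 0) * postChain L pstar g j z / Cz pstar z := by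
      intro o
      rw [eq_div_iff hC, mul_comm]
      exact inv g hp0 hp1 j z o
    rw [Finset.sum_congr rfl fun o _ => hT o, ← Finset.sum_div, ← Finset.sum_mul]
    rw [show (∑ o : Fin L → V, if Cns z o then pstar o else 0) = Cz pstar z from rfl]
    rw [mul_comm, mul_div_assoc, div_self hC, mul_one]
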